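/- Let μ, ν be Borel probability measures on ℝ. Then the Lévy distance satisfies d_L(μ, ν) ≤ 2·(sup{ |∫ f dμ − ∫ f dν| : ‖f‖_∞ + Lip(f) ≤ 1 })^{1/2}, where the supremum runs over bounded Lipschitz functions f: ℝ → ℝ. -/

import Mathlib

/-!
Test the bounded-Lipschitz bound against `(ε / 2) • g`, where `g` is the `ε`-thickened indicator
of `O`: `g = 1` on `O`, `g = 0` off the `ε`-thickening `Oᵉ`, `0 ≤ g ≤ 1` and `g` is `ε⁻¹`-Lipschitz,
so `‖(ε / 2) • g‖_∞ + Lip((ε / 2) • g) ≤ ε / 2 + 1 / 2 ≤ 1` once `ε ≤ 1`. This gives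
`(ε / 2) (μ O - ν Oᵉ) ≤ D`, i.e. `μ O ≤ ν Oᵉ + 2D / ε`, and `2D / ε < ε` as soon as `2 √D < ε`.
For `ε > 1` the Lévy inequality holds trivially for probability measures.
-/

open MeasureTheory NNReal Metric

variable {X : Type*} [PseudoMetricSpace X] [MeasurableSpace X]

/-- `d_BL(μ, ν) ≤ D`. -/
def BLDistLE (μ ν : Measure X) (D : ℝ) : Prop :=
  ∀ (f : X → ℝ) (c : ℝ) (L : ℝ≥0), (∀ x, |f x| ≤ c) → LipschitzWith L f →
    c + (L : ℝ) ≤ 1 → |(∫ x, f x ∂μ) - ∫ x, f x ∂ν| ≤ D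

lemma BLDistLE.symm {μ ν : Measure X} {D : ℝ} (h : BLDistLE μ ν D) : BLDistLE ν μ D :=
  fun f c L hf hL hcL => abs_sub_comm (∫ x, f x ∂ν) (∫ x, f x ∂μ) ▸ h f c L hf hL hcL

section FiniteMeasures

variable [OpensMeasurableSpace X] {μ ν : Measure X} [IsFiniteMeasure μ] [IsFiniteMeasure ν]

lemma measureReal_sub_measureReal_thickening_le_integral_sub {δ : ℝ} (hδ : 0 < δ) {E : Set X}
    (hE : MeasurableSet E) :
    μ.real E - ν.real (thickening δ E) ≤
      (∫ x, (thickenedIndicator hδ E x : ℝ) ∂μ) - ∫ x, (thickenedIndicator hδ E x : ℝ) ∂ν := by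
  have hμ : μ.real E ≤ ∫ x, (thickenedIndicator hδ E x : ℝ) ∂μ := by
    rw [← integral_indicator_one hE]
    refine integral_mono ((integrable_indicator_iff hE).2 (integrable_const _).integrableOn)
      (integrable_thickenedIndicator _ _) fun x => ?_
    by_cases hx : x ∈ E
    · simp [hx, thickenedIndicator_one hδ E hx]
    · simp [hx]
  have hν : ∫ x, (thickenedIndicator hδ E x : ℝ) ∂ν ≤ ν.real (thickening δ E) := by
    have hT : MeasurableSet (thickening δ E) := isOpen_thickening.measurableSet
    rw [← integral_indicator_one hT]
    refine integral_mono (integrable_thickenedIndicator _ _)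
      ((integrable_indicator_iff hT).2 (integrable_const _).integrableOn) fun x => ?_
    by_cases hx : x ∈ thickening δ E
    · simpa [hx] using thickenedIndicator_le_one hδ E x
    · simp [hx, thickenedIndicator_zero hδ E hx]
  linarith

lemma BLDistLE.measureReal_le_measureReal_thickening_add {D ε : ℝ} (hBL : BLDistLE μ ν D)
    (hε : 0 < ε) (hε1 : ε ≤ 1) {E : Set X} (hE : MeasurableSet E) :
    μ.real E ≤ ν.real (thickening ε E) + 2 * D / ε := by
  set g : X → ℝ := fun x => thickenedIndicator hε E x
  have hlip : LipschitzWith (‖ε / 2‖₊ * (1 * ε.toNNReal⁻¹)) (fun x => ε / 2 * g x) :=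
    (lipschitzWith_smul (ε / 2)).comp
      (NNReal.isometry_coe.lipschitz.comp (lipschitzWith_thickenedIndicator hε E))
  have hbound : ∀ x, |ε / 2 * g x| ≤ ε / 2 := fun x => by
    have h0 : 0 ≤ g x := (thickenedIndicator hε E x).2
    have h1 : g x ≤ 1 := by exact_mod_cast thickenedIndicator_le_one hε E x
    rw [abs_of_nonneg (by positivity)]
    nlinarith
  have hconst : ε / 2 + ((‖ε / 2‖₊ * (1 * ε.toNNReal⁻¹) : ℝ≥0) : ℝ) ≤ 1 := by
    have : ((‖ε / 2‖₊ * (1 * ε.toNNReal⁻¹) : ℝ≥0) : ℝ) = 1 / 2 := by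
      push_cast
      rw [Real.norm_of_nonneg (by positivity), Real.coe_toNNReal _ hε.le]
      field_simp
    linarith
  have hD := (le_abs_self _).trans (hBL _ _ _ hbound hlip hconst)
  rw [integral_const_mul, integral_const_mul, ← mul_sub] at hD
  have hgap := measureReal_sub_measureReal_thickening_le_integral_sub (μ := μ) (ν := ν) hε hE
  have : μ.real E - ν.real (thickening ε E) ≤ 2 * D / ε := by
    rw [le_div_iff₀ hε]
    nlinarith
  linarith

end FiniteMeasures

lemma BLDistLE.measure_le_measure_thickening_add [OpensMeasurableSpace X] {μ ν : Measure X}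
    [IsProbabilityMeasure μ] [IsFiniteMeasure ν] {D ε : ℝ} (hBL : BLDistLE μ ν D) (hε : 0 < ε)
    (hD : 2 * D / ε ≤ ε)
    {E : Set X} (hE : MeasurableSet E) :
    μ E ≤ ν (thickening ε E) + ENNReal.ofReal ε := by
  rcases le_or_gt 1 ε with hε1 | hε1
  · calc μ E ≤ 1 := prob_le_one
      _ ≤ ENNReal.ofReal ε := ENNReal.one_le_ofReal.2 hε1
      _ ≤ _ := le_add_self
  calc μ E = ENNReal.ofReal (μ.real E) := (ofReal_measureReal (measure_ne_top μ E)).symm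
    _ ≤ ENNReal.ofReal (ν.real (thickening ε E) + ε) := by
      gcongr
      linarith [hBL.measureReal_le_measureReal_thickening_add hε hε1.le hE]
    _ ≤ ENNReal.ofReal (ν.real (thickening ε E)) + ENNReal.ofReal ε := ENNReal.ofReal_add_le
    _ = ν (thickening ε E) + ENNReal.ofReal ε := by rw [ofReal_measureReal (measure_ne_top _ _)]

open MeasureTheory NNReal in
theorem levy_le_sqrt_bl_general (μ ν : Measure ℝ) [IsProbabilityMeasure μ] [IsProbabilityMeasure ν]
    (D : ℝ)
    (hBL : ∀ (f : ℝ → ℝ) (c : ℝ) (L : ℝ≥0), (∀ x, |f x| ≤ c) → LipschitzWith L f →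
      c + (L : ℝ) ≤ 1 → |(∫ x, f x ∂μ) - ∫ x, f x ∂ν| ≤ D) :
    ∀ ε : ℝ, 2 * Real.sqrt D < ε → ∀ O : Set ℝ, IsOpen O →
      μ O ≤ ν (Metric.thickening ε O) + ENNReal.ofReal ε ∧
      ν O ≤ μ (Metric.thickening ε O) + ENNReal.ofReal ε := by
  intro ε hε O hO
  have hBL' : BLDistLE μ ν D := hBL
  have hε0 : 0 < ε := (mul_nonneg zero_le_two (Real.sqrt_nonneg D)).trans_lt hε
  have hD : 2 * D / ε ≤ ε := by
    have : D < (ε / 2) ^ 2 := (Real.sqrt_lt' (half_pos hε0)).1 (by linarith)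
    rw [div_le_iff₀ hε0]
    nlinarith
  exact ⟨hBL'.measure_le_measure_thickening_add hε0 hD hO.measurableSet,
    hBL'.symm.measure_le_measure_thickening_add hε0 hD hO.measurableSet⟩

open MeasureTheory NNReal in
theorem levy_le_sqrt_bl (μ ν : Measure ℝ) [IsProbabilityMeasure μ] [IsProbabilityMeasure ν]
    (D : ℝ) (hD : 0 ≤ D)
    (hBL : ∀ (f : ℝ → ℝ) (c : ℝ) (L : ℝ≥0), (∀ x, |f x| ≤ c) → LipschitzWith L f →
      c + (L : ℝ) ≤ 1 → |(∫ x, f x ∂μ) - ∫ x, f x ∂ν| ≤ D) :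
    ∀ ε : ℝ, 2 * Real.sqrt D < ε → ∀ O : Set ℝ, IsOpen O →
      μ O ≤ ν (Metric.thickening ε O) + ENNReal.ofReal ε ∧
      ν O ≤ μ (Metric.thickening ε O) + ENNReal.ofReal ε :=
  levy_le_sqrt_bl_general μ ν D hBL
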